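/- arXiv:2211.02285 — 6 statements merged into one kernel-verified Lean document; each statement's English description precedes it below -/
import Mathlib

section
/- Akin's lemma: If player j uses a time-independent memory-one strategy T_j in an infinitely repeated game, and P* is any limit distribution of the time-averaged marginal distributions of action profiles, then for every action a_j of player j, the sum over all action profiles a' of P*(a') · T̂_j(a_j | a') equals 0, where T̂_j(a_j | a') := T_j(a_j | a') - δ(a_j, a'_j). -/
open Finset Filter

/-- Akin's lemma.  Player `j` uses the time-independent memory-one strategy `T`
(where `T a' x` is the probability of playing `x` after profile `a'`).
`P t` is the distribution of the action profile at round `t`; since `j` plays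
memory-one, the marginal of `j`'s action at round `t+1` is obtained from
`P t` via `T` (hypothesis `hmarg`).  If the time-averaged marginals converge
to `Pstar`, then `∑_{a'} Pstar a' * (T a' x - δ_{x, a' j}) = 0` for every action `x`. -/
theorem akin_lemma {n : ℕ} {A : Type} [Fintype A] [DecidableEq A]
    (j : Fin n)
    (T : (Fin n → A) → A → ℝ)
    (hT : ∀ a', (∀ x, 0 ≤ T a' x) ∧ ∑ x, T a' x = 1)
    (P : ℕ → (Fin n → A) → ℝ)
    (hP : ∀ t, (∀ a, 0 ≤ P t a) ∧ ∑ a, P t a = 1)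
    (hmarg : ∀ t (x : A),
      ∑ a', P t a' * T a' x = ∑ a ∈ Finset.univ.filter (fun a => a j = x), P (t + 1) a)
    (Pstar : (Fin n → A) → ℝ)
    (hlim : ∀ a, Tendsto (fun N : ℕ => (∑ t ∈ Finset.range N, P t a) / N)
      atTop (nhds (Pstar a))) :
    ∀ x : A, ∑ a', Pstar a' * (T a' x - (if x = a' j then 1 else 0)) = 0 := by
  intro x
  set S : ℕ → ℝ := fun t => ∑ a ∈ Finset.univ.filter (fun a => a j = x), P t a with hS
  have hdelta : ∀ t, ∑ a', P t a' * (if x = a' j then 1 else 0) = S t := by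
    intro t
    simp only [hS]
    rw [Finset.sum_filter]
    apply Finset.sum_congr rfl
    intro a _
    by_cases h : x = a j
    · simp [h]
    · simp [h, Ne.symm h]
  have hstep : ∀ t, ∑ a', P t a' * (T a' x - (if x = a' j then 1 else 0))
      = S (t + 1) - S t := by
    intro t
    have : ∑ a', P t a' * (T a' x - (if x = a' j then 1 else 0))
        = (∑ a', P t a' * T a' x) - ∑ a', P t a' * (if x = a' j then 1 else 0) := by
      rw [← Finset.sum_sub_distrib]
      apply Finset.sum_congr rfl
      intro a _; ring
    rw [this, hmarg t x, hdelta t]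
  have hbound : ∀ t, 0 ≤ S t ∧ S t ≤ 1 := by
    intro t
    refine ⟨Finset.sum_nonneg fun a _ => (hP t).1 a, ?_⟩
    rw [← (hP t).2]
    exact Finset.sum_le_sum_of_subset_of_nonneg (Finset.filter_subset _ _)
      (fun a _ _ => (hP t).1 a)
  have h2 : ∀ N : ℕ, (∑ a', (∑ t ∈ Finset.range N, P t a') / N *
      (T a' x - (if x = a' j then 1 else 0))) = (S N - S 0) / N := by
    intro N
    have : ∀ a' : Fin n → A, (∑ t ∈ Finset.range N, P t a') / N *
        (T a' x - (if x = a' j then 1 else 0))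
        = (∑ t ∈ Finset.range N, P t a' * (T a' x - (if x = a' j then 1 else 0))) / N := by
      intro a'
      rw [div_mul_eq_mul_div, Finset.sum_mul]
    rw [Finset.sum_congr rfl fun a' _ => this a', ← Finset.sum_div, Finset.sum_comm]
    congr 1
    rw [Finset.sum_congr rfl fun t _ => hstep t, Finset.sum_range_sub]
  have h1 : Tendsto (fun N : ℕ => ∑ a', (∑ t ∈ Finset.range N, P t a') / N *
      (T a' x - (if x = a' j then 1 else 0))) atTop
      (nhds (∑ a', Pstar a' * (T a' x - (if x = a' j then 1 else 0)))) :=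
    tendsto_finset_sum _ fun a' _ => ((hlim a').mul_const _)
  have h3 : Tendsto (fun N : ℕ => (S N - S 0) / N) atTop (nhds 0) := by
    refine squeeze_zero_norm (a := fun N : ℕ => 1 / (N:ℝ)) (fun N => ?_) tendsto_one_div_atTop_nhds_zero_nat
    rw [norm_div, Real.norm_natCast]
    show |S N - S 0| / (N:ℝ) ≤ 1 / (N:ℝ)
    gcongr
    rw [abs_sub_le_iff]
    have h0 := hbound 0
    have hN := hbound N
    constructor <;> linarith
  rw [show (0 : ℝ) = 0 from rfl]
  have h1' : Tendsto (fun N : ℕ => (S N - S 0) / N) atTop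
      (nhds (∑ a', Pstar a' * (T a' x - (if x = a' j then 1 else 0)))) := by
    rw [show (fun N : ℕ => (S N - S 0) / N) = fun N : ℕ =>
      ∑ a', (∑ t ∈ Finset.range N, P t a') / N * (T a' x - (if x = a' j then 1 else 0))
      from funext fun N => (h2 N).symm]
    exact h1
  exact tendsto_nhds_unique h1' h3
end

section
/- Existence of ZD strategies (sufficiency direction): Let B : A^n → ℝ be not identically zero. If there exist two distinct actions ā, a̲ ∈ A of player j such that B(ā, a_{-j}) ≥ 0 for all a_{-j} and B(a̲, a_{-j}) ≤ 0 for all a_{-j}, then there exists a time-independent memory-one strategy T_j and nontrivial coefficients (c_a)_{a∈A} (not all equal) such that Σ_{a_j} c_{a_j} T̂_j(a_j | a') = B(a') for all profiles a', possibly after rescaling B by a positive constant. -/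
open Finset

/-!
The simplex is convex and `p ↦ ∑ i, c i * p i` is linear, so its image is the interval spanned by the
values of `c`. Take `c = 1` at `aund`, `-1` at `abar` and `0` elsewhere: the Press–Dyson value
`∑ c (p - δ_y)` then ranges over `[-1 - c y, 1 - c y]`, which is `[0, 2]` for `y = abar`,
`[-2, 0]` for `y = aund` and `[-1, 1]` otherwise. Once `B` is scaled into `[-1, 1]`, the sign
conditions put `α * B a'` in the range for `y = a' j`, and `T a'` is any `p` attaining it.
-/

theorem exists_mem_stdSimplex_sum_mul_eq {ι : Type*} [Fintype ι] (c : ι → ℝ) {i₀ i₁ : ι}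
    {v : ℝ} (hv : v ∈ Set.Icc (c i₀) (c i₁)) :
    ∃ p ∈ stdSimplex ℝ ι, ∑ i, c i * p i = v := by
  classical
  let f := Fintype.linearCombination ℝ c
  have hf : ∀ p, f p = ∑ i, c i * p i := fun p => by
    simp only [f, Fintype.linearCombination_apply, smul_eq_mul, mul_comm]
  have hvertex : ∀ i, c i ∈ f '' stdSimplex ℝ ι := fun i =>
    ⟨Pi.single i 1, single_mem_stdSimplex ℝ i, by simp [hf, Pi.single_apply]⟩
  obtain ⟨p, hp, rfl⟩ :=
    ((convex_stdSimplex ℝ ι).linear_image f).ordConnected.out (hvertex i₀) (hvertex i₁) hv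
  exact ⟨p, hp, (hf p).symm⟩

theorem exists_mem_stdSimplex_sum_mul_sub_eq {ι : Type*} [Fintype ι] [DecidableEq ι]
    (c : ι → ℝ) (y : ι) {i₀ i₁ : ι} {v : ℝ} (hv : v + c y ∈ Set.Icc (c i₀) (c i₁)) :
    ∃ p ∈ stdSimplex ℝ ι, ∑ i, c i * (p i - if i = y then 1 else 0) = v := by
  obtain ⟨p, hp, hsum⟩ := exists_mem_stdSimplex_sum_mul_eq c hv
  refine ⟨p, hp, ?_⟩
  simp only [mul_sub, Finset.sum_sub_distrib, hsum, mul_ite, mul_one, mul_zero,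
    Finset.sum_ite_eq', Finset.mem_univ, if_true]
  ring

theorem exists_pos_mul_abs_le_one {ι : Type*} [Fintype ι] (f : ι → ℝ) :
    ∃ α > 0, ∀ i, |α * f i| ≤ 1 := by
  refine ⟨(1 + ∑ i, |f i|)⁻¹, by positivity, fun i => ?_⟩
  have hle : |f i| ≤ ∑ i, |f i| :=
    Finset.single_le_sum (fun i _ => abs_nonneg (f i)) (Finset.mem_univ i)
  rw [abs_mul, abs_inv, abs_of_pos (by positivity), inv_mul_le_one₀ (by positivity)]
  linarith

theorem zd_exists_of_sign_actions_general {n : ℕ} {A : Type} [Fintype A] [DecidableEq A]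
    (j : Fin n) (B : (Fin n → A) → ℝ)
    (abar aund : A) (hne : abar ≠ aund)
    (hpos : ∀ a : Fin n → A, a j = abar → 0 ≤ B a)
    (hneg : ∀ a : Fin n → A, a j = aund → B a ≤ 0) :
    ∃ (T : (Fin n → A) → A → ℝ) (c : A → ℝ) (α : ℝ),
      0 < α ∧
      (∀ a', (∀ x, 0 ≤ T a' x) ∧ ∑ x, T a' x = 1) ∧
      (∃ x y : A, c x ≠ c y) ∧
      (∀ a' : Fin n → A,
        ∑ x, c x * (T a' x - (if x = a' j then 1 else 0)) = α * B a') := by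
  set c : A → ℝ := fun x => if x = aund then 1 else if x = abar then -1 else 0
  have hc_aund : c aund = 1 := if_pos rfl
  have hc_abar : c abar = -1 := by simp [c, hne]
  obtain ⟨α, hα, hαB⟩ := exists_pos_mul_abs_le_one B
  have hrange : ∀ a', α * B a' + c (a' j) ∈ Set.Icc (c abar) (c aund) := by
    intro a'
    obtain ⟨hlo, hhi⟩ := abs_le.mp (hαB a')
    rw [hc_aund, hc_abar]
    by_cases hbar : a' j = abar
    · have := mul_nonneg hα.le (hpos a' hbar)
      rw [hbar, hc_abar]; constructor <;> linarith
    by_cases hund : a' j = aund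
    · have := mul_nonpos_of_nonneg_of_nonpos hα.le (hneg a' hund)
      rw [hund, hc_aund]; constructor <;> linarith
    simp only [c, if_neg hbar, if_neg hund]
    constructor <;> linarith
  choose T hT hTsum using fun a' => exists_mem_stdSimplex_sum_mul_sub_eq c (a' j) (hrange a')
  exact ⟨T, c, α, hα, hT, ⟨aund, abar, by rw [hc_aund, hc_abar]; norm_num⟩, hTsum⟩

/-- Existence of ZD strategies (sufficiency).  If `B` is not identically zero and
player `j` has two distinct actions `abar`, `aund` with `B ≥ 0` whenever `j` plays
`abar` and `B ≤ 0` whenever `j` plays `aund`, then there is a valid memory-one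
strategy `T` and non-constant coefficients `c` such that the linear combination of
Press–Dyson vectors equals `B` rescaled by a positive constant `α`. -/
theorem zd_exists_of_sign_actions {n : ℕ} {A : Type} [Fintype A] [DecidableEq A]
    (j : Fin n) (B : (Fin n → A) → ℝ)
    (hB : ∃ a, B a ≠ 0)
    (abar aund : A) (hne : abar ≠ aund)
    (hpos : ∀ a : Fin n → A, a j = abar → 0 ≤ B a)
    (hneg : ∀ a : Fin n → A, a j = aund → B a ≤ 0) :
    ∃ (T : (Fin n → A) → A → ℝ) (c : A → ℝ) (α : ℝ),
      0 < α ∧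
      (∀ a', (∀ x, 0 ≤ T a' x) ∧ ∑ x, T a' x = 1) ∧
      (∃ x y : A, c x ≠ c y) ∧
      (∀ a' : Fin n → A,
        ∑ x, c x * (T a' x - (if x = a' j then 1 else 0)) = α * B a') :=
  zd_exists_of_sign_actions_general j B abar aund hne hpos hneg
end

section
/- Existence of ZD strategies (necessity direction): If player j has a ZD strategy controlling B (i.e., B is a nontrivial linear combination Σ_{a_j} c_{a_j} T̂_j(a_j|a') of Press–Dyson vectors of a valid memory-one strategy, with B not identically zero), then there exist two distinct actions ā, a̲ ∈ A such that B(ā, a_{-j}) ≥ 0 for all a_{-j} and B(a̲, a_{-j}) ≤ 0 for all a_{-j}. -/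
open Finset


section WeightedAverage

variable {ι : Type*} [Fintype ι] {p c : ι → ℝ}

theorem le_sum_mul_of_forall_le (hp : ∀ x, 0 ≤ p x) (hp₁ : ∑ x, p x = 1) {m : ℝ}
    (hm : ∀ x, m ≤ c x) : m ≤ ∑ x, c x * p x :=
  calc m = ∑ x, m * p x := by rw [← mul_sum, hp₁, mul_one]
    _ ≤ ∑ x, c x * p x := sum_le_sum fun x _ => mul_le_mul_of_nonneg_right (hm x) (hp x)

theorem sum_mul_le_of_forall_le (hp : ∀ x, 0 ≤ p x) (hp₁ : ∑ x, p x = 1) {M : ℝ}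
    (hM : ∀ x, c x ≤ M) : ∑ x, c x * p x ≤ M :=
  calc ∑ x, c x * p x ≤ ∑ x, M * p x :=
        sum_le_sum fun x _ => mul_le_mul_of_nonneg_right (hM x) (hp x)
    _ = M := by rw [← mul_sum, hp₁, mul_one]

theorem sum_mul_sub_ite_eq [DecidableEq ι] (y : ι) :
    ∑ x, c x * (p x - if x = y then 1 else 0) = ∑ x, c x * p x - c y := by
  simp [mul_sub, sum_sub_distrib]

end WeightedAverage

theorem exists_ne_forall_le_forall_le {α β : Type*} [Finite α] [LinearOrder β] {f : α → β}
    (hf : ∃ x y, f x ≠ f y) :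
    ∃ lo hi, lo ≠ hi ∧ (∀ x, f lo ≤ f x) ∧ (∀ x, f x ≤ f hi) := by
  obtain ⟨x, y, hxy⟩ := hf
  have : Nonempty α := ⟨x⟩
  obtain ⟨lo, hlo⟩ := Finite.exists_min f
  obtain ⟨hi, hhi⟩ := Finite.exists_max f
  refine ⟨lo, hi, ?_, hlo, hhi⟩
  rintro rfl
  exact hxy ((hhi x).antisymm (hlo x) |>.trans ((hhi y).antisymm (hlo y)).symm)

theorem sign_actions_of_zd_general {n : ℕ} {A : Type} [Fintype A] [DecidableEq A]
    (j : Fin n) (B : (Fin n → A) → ℝ)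
    (T : (Fin n → A) → A → ℝ)
    (hT : ∀ a', (∀ x, 0 ≤ T a' x) ∧ ∑ x, T a' x = 1)
    (c : A → ℝ) (hc : ∃ x y : A, c x ≠ c y)
    (hZD : ∀ a' : Fin n → A,
      ∑ x, c x * (T a' x - (if x = a' j then 1 else 0)) = B a') :
    ∃ abar aund : A, abar ≠ aund ∧
      (∀ a : Fin n → A, a j = abar → 0 ≤ B a) ∧
      (∀ a : Fin n → A, a j = aund → B a ≤ 0) := by
  obtain ⟨abar, aund, hne, hmin, hmax⟩ := exists_ne_forall_le_forall_le hc
  have hB : ∀ a, B a = ∑ x, c x * T a x - c (a j) := fun a =>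
    (hZD a).symm.trans (sum_mul_sub_ite_eq (a j))
  refine ⟨abar, aund, hne, fun a ha => ?_, fun a ha => ?_⟩
  · rw [hB, ha, sub_nonneg]
    exact le_sum_mul_of_forall_le (hT a).1 (hT a).2 hmin
  · rw [hB, ha, sub_nonpos]
    exact sum_mul_le_of_forall_le (hT a).1 (hT a).2 hmax

/-- Existence of ZD strategies (necessity).  If a valid memory-one strategy `T` of
player `j` with non-constant coefficients `c` controls the non-identically-zero
function `B` (`∑_x c x * T̂(x|a') = B a'` for all `a'`), then player `j` has two
distinct actions `abar ≠ aund` such that `B ≥ 0` whenever `j` plays `abar` and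
`B ≤ 0` whenever `j` plays `aund`. -/
theorem sign_actions_of_zd {n : ℕ} {A : Type} [Fintype A] [DecidableEq A]
    (j : Fin n) (B : (Fin n → A) → ℝ)
    (T : (Fin n → A) → A → ℝ)
    (hT : ∀ a', (∀ x, 0 ≤ T a' x) ∧ ∑ x, T a' x = 1)
    (c : A → ℝ) (hc : ∃ x y : A, c x ≠ c y)
    (hB : ∃ a, B a ≠ 0)
    (hZD : ∀ a' : Fin n → A,
      ∑ x, c x * (T a' x - (if x = a' j then 1 else 0)) = B a') :
    ∃ abar aund : A, abar ≠ aund ∧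
      (∀ a : Fin n → A, a j = abar → 0 ≤ B a) ∧
      (∀ a : Fin n → A, a j = aund → B a ≤ 0) :=
  sign_actions_of_zd_general j B T hT c hc hZD
end

section
/- Weakest action lemma: In a finite totally symmetric unexploitable game with actions A = {1,...,L}, let A^(l) be the sets obtained by recursively removing a selected strongest action a*(A^(l)), and let a̲ := a*(A^(L)) be the last remaining action. Then a̲ is weakest: s_j(a̲, a_{-j}) - G_j(a̲, a_{-j}) ≤ 0 for all a_{-j} ∈ A^{n-1}. -/
/-!
Let `a̲` be the last selected action and consider a profile in which player `j` plays `a̲`.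
Take the last stage `A^(l)` of the elimination that still contains every action of the profile.
If it is the final singleton `{a̲}`, the profile is diagonal and total symmetry makes all payoffs
equal. Otherwise some player `k` plays the action `a*(A^(l))` removed at that stage; `k ≠ j`
because `a̲` survives the removal, and unexploitability on `A^(l)` gives `s_j ≤ s_k ≤ G_j`.
-/

open Finset

lemma eraseNonempty {n : ℕ} (hn : 2 ≤ n) (j : Fin n) :
    (Finset.univ.erase j).Nonempty := by
  apply Finset.card_pos.mp
  rw [Finset.card_erase_of_mem (Finset.mem_univ j), Finset.card_univ, Fintype.card_fin]
  omega

/-- `chain astar l` is the set `A^(l+1)` obtained from the full action set by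
successively removing the selected strongest actions. -/
def chain {A : Type} [Fintype A] [DecidableEq A] (astar : Finset A → A) : ℕ → Finset A
  | 0 => Finset.univ
  | l + 1 => (chain astar l).erase (astar (chain astar l))

lemma le_sup'_erase_of_exists_le {ι β : Type*} [Fintype ι] [DecidableEq ι] [LinearOrder β]
    {f : ι → β} {j : ι} (hne : (univ.erase j).Nonempty) (h : ∃ k ≠ j, f j ≤ f k) :
    f j ≤ (univ.erase j).sup' hne f :=
  let ⟨k, hkj, hjk⟩ := h
  hjk.trans (le_sup' f (mem_erase.2 ⟨hkj, mem_univ k⟩))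

lemma apply_const_eq_of_perm_invariant {ι A β : Type*} [DecidableEq ι]
    (s : ι → (ι → A) → β)
    (hsym : ∀ (π : Equiv.Perm ι) (j : ι) (a : ι → A), s (π j) a = s j (a ∘ π))
    (x : A) (j k : ι) : s j (fun _ => x) = s k (fun _ => x) := by
  simpa [Function.comp_def] using hsym (Equiv.swap k j) k fun _ => x

lemma exists_forall_mem_exists_not_mem_succ {ι α : Type*} (S : ℕ → Finset α) (f : ι → α)
    (h0 : ∀ i, f i ∈ S 0) {N : ℕ} (hN : ¬ ∀ i, f i ∈ S N) :
    ∃ l < N, (∀ i, f i ∈ S l) ∧ ∃ k, f k ∉ S (l + 1) := by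
  induction N with
  | zero => exact absurd h0 hN
  | succ m ih =>
    by_cases hm : ∀ i, f i ∈ S m
    · exact ⟨m, m.lt_succ_self, hm, not_forall.1 hN⟩
    · obtain ⟨l, hlm, hl⟩ := ih hm
      exact ⟨l, hlm.trans m.lt_succ_self, hl⟩

section chain

variable {A : Type} [Fintype A] [DecidableEq A] {astar : Finset A → A}

lemma chain_antitone : Antitone (chain astar) :=
  antitone_nat_of_succ_le fun _ => erase_subset _ _

lemma card_chain (hmem : ∀ B : Finset A, B.Nonempty → astar B ∈ B) {l : ℕ}
    (hl : l ≤ Fintype.card A) : #(chain astar l) = Fintype.card A - l := by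
  induction l with
  | zero => simp [chain]
  | succ l ih =>
    have hcard := ih (by omega)
    have hne : (chain astar l).Nonempty := card_pos.1 (by omega)
    rw [chain, card_erase_of_mem (hmem _ hne), hcard]
    omega

lemma mem_chain_card_sub_one_iff [Nonempty A]
    (hmem : ∀ B : Finset A, B.Nonempty → astar B ∈ B) {x : A} :
    x ∈ chain astar (Fintype.card A - 1) ↔ x = astar (chain astar (Fintype.card A - 1)) := by
  have hpos : 0 < Fintype.card A := Fintype.card_pos
  have hcard : #(chain astar (Fintype.card A - 1)) = 1 := by
    rw [card_chain hmem (by omega)]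
    omega
  have hne : (chain astar (Fintype.card A - 1)).Nonempty := card_pos.1 (by omega)
  exact ⟨fun hx => card_le_one.1 hcard.le _ hx _ (hmem _ hne), fun hx => hx ▸ hmem _ hne⟩

end chain

theorem weakest_action_general {n : ℕ} (hn : 2 ≤ n) {A : Type}
    [Fintype A] [DecidableEq A]
    (s : Fin n → (Fin n → A) → ℝ)
    (hsym : ∀ (π : Equiv.Perm (Fin n)) (j : Fin n) (a : Fin n → A),
      s (π j) a = s j (a ∘ π))
    (astar : Finset A → A)
    (hunex : ∀ A' : Finset A, A'.Nonempty → astar A' ∈ A' ∧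
      ∀ (j : Fin n) (a : Fin n → A), a j = astar A' → (∀ k, k ≠ j → a k ∈ A') →
        (Finset.univ.erase j).sup' (eraseNonempty hn j) (fun k => s k a) ≤ s j a) :
    ∀ (j : Fin n) (a : Fin n → A),
      a j = astar (chain astar (Fintype.card A - 1)) →
      s j a ≤ (Finset.univ.erase j).sup' (eraseNonempty hn j) (fun k => s k a) := by
  intro j a haj
  have : Nonempty A := ⟨a j⟩
  have hmem : ∀ B : Finset A, B.Nonempty → astar B ∈ B := fun B hB => (hunex B hB).1
  apply le_sup'_erase_of_exists_le (f := fun k => s k a)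
  by_cases hdiag : ∀ k, a k ∈ chain astar (Fintype.card A - 1)
  · have hconst : a = fun _ => astar (chain astar (Fintype.card A - 1)) :=
      funext fun m => (mem_chain_card_sub_one_iff hmem).1 (hdiag m)
    obtain ⟨k, hk⟩ := eraseNonempty hn j
    exact ⟨k, ne_of_mem_erase hk, hconst ▸ (apply_const_eq_of_perm_invariant s hsym _ j k).le⟩
  · obtain ⟨l, hl, hin, k, hk⟩ :=
      exists_forall_mem_exists_not_mem_succ (chain astar) a (fun _ => mem_univ _) hdiag
    have hak : a k = astar (chain astar l) := by
      by_contra hne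
      exact hk (mem_erase.2 ⟨hne, hin k⟩)
    have hkj : k ≠ j := by
      rintro rfl
      exact hk (chain_antitone (Nat.succ_le_of_lt hl) ((mem_chain_card_sub_one_iff hmem).2 haj))
    have hk_strongest := (hunex _ ⟨a k, hin k⟩).2 k a hak fun m _ => hin m
    exact ⟨k, hkj, (le_sup' (fun m => s m a) (mem_erase.2 ⟨hkj.symm, mem_univ j⟩)).trans
      hk_strongest⟩

/-- Weakest action lemma: in a finite totally symmetric unexploitable game, the last
remaining action `a̲ = astar (A^(L))` is weakest, i.e. whenever player `j` plays `a̲`,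
`s_j(a) ≤ G_j(a) = max_{k ≠ j} s_k(a)` for every profile of the opponents. -/
theorem weakest_action {n : ℕ} (hn : 2 ≤ n) {A : Type}
    [Fintype A] [DecidableEq A] [Nonempty A]
    (s : Fin n → (Fin n → A) → ℝ)
    (hsym : ∀ (π : Equiv.Perm (Fin n)) (j : Fin n) (a : Fin n → A),
      s (π j) a = s j (a ∘ π))
    (astar : Finset A → A)
    (hunex : ∀ A' : Finset A, A'.Nonempty → astar A' ∈ A' ∧
      ∀ (j : Fin n) (a : Fin n → A), a j = astar A' → (∀ k, k ≠ j → a k ∈ A') →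
        (Finset.univ.erase j).sup' (eraseNonempty hn j) (fun k => s k a) ≤ s j a) :
    ∀ (j : Fin n) (a : Fin n → A),
      a j = astar (chain astar (Fintype.card A - 1)) →
      s j a ≤ (Finset.univ.erase j).sup' (eraseNonempty hn j) (fun k => s k a) :=
  weakest_action_general hn s hsym astar hunex
end

section
/- Theorem (existence of unbeatable ZD strategies): If the stage game is a non-trivial unexploitable finite totally symmetric n-player game, then for every player j there exists a ZD strategy of player j controlling B(a) := s_j(a) - G_j(a); in particular, this strategy unilaterally enforces ⟨s_j⟩* = ⟨G_j⟩* and hence S_j ≥ S_k for all k ≠ j, regardless of the other players' strategies. -/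
/-!
Player `j` builds the ZD strategy from two actions: an action `ā` that is never beaten
(the unexploitable choice `a*(A)`), and an action `a̲ ≠ ā` with which `j` never leads.
The second comes from peeling off `a*(A)`, `a*(A ∖ {a*(A)})`, … : if some opponent `k` plays the
action peeled off first among those in the profile, then `k` is not beaten, so
`s_j ≤ G_k ≤ s_k ≤ G_j`. Given such a pair, a memory-one strategy mixing only `a̲` and `ā`
realises `B` as a Press–Dyson combination, and Akin's lemma gives `⟨B⟩* = 0`. Two distinct
actions exist because, by total symmetry, a game with a single action is trivial.
-/

open Finset

-- Akin's lemma, with `P` a limit distribution and `v ω` the Press–Dyson vectors at state `ω`.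
theorem sum_mul_eq_zero_of_pressDyson {Ω X : Type*} [Fintype Ω] [Fintype X]
    (P : Ω → ℝ) (c : X → ℝ) (v : Ω → X → ℝ) (B : Ω → ℝ)
    (hB : ∀ ω, ∑ x, c x * v ω x = B ω) (hP : ∀ x, ∑ ω, P ω * v ω x = 0) :
    ∑ ω, P ω * B ω = 0 := by
  calc ∑ ω, P ω * B ω = ∑ x, c x * ∑ ω, P ω * v ω x := by
        simp_rw [← hB, mul_sum]
        rw [sum_comm]
        exact sum_congr rfl fun _ _ => sum_congr rfl fun _ _ => by ring
    _ = 0 := by simp [hP]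

theorem exists_zd_strategy {Ω X : Type*} [Fintype Ω] [Fintype X] [DecidableEq X]
    (own : Ω → X) (B : Ω → ℝ) {lo hi : X} (hne : lo ≠ hi)
    (hlo : ∀ ω, own ω = lo → B ω ≤ 0) (hhi : ∀ ω, own ω = hi → 0 ≤ B ω) :
    ∃ (T : Ω → X → ℝ) (c : X → ℝ),
      (∀ ω, (∀ x, 0 ≤ T ω x) ∧ ∑ x, T ω x = 1) ∧ c lo ≠ c hi ∧
      ∀ ω, ∑ x, c x * (T ω x - if x = own ω then 1 else 0) = B ω := by
  set M : ℝ := 1 + ∑ ω, |B ω|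
  have hB : ∀ ω, |B ω| < M := fun ω => by
    have := single_le_sum (fun ω _ => abs_nonneg (B ω)) (mem_univ ω)
    simp only [M]
    linarith
  have hM : 0 < M := by positivity
  -- `T ω` plays `lo` with probability `t ω` and `hi` otherwise, so `∑ x, c x * T ω x = 2 M t ω`;
  -- the sign conditions on `B` keep `t ω = (B ω + c (own ω)) / (2 M)` in `[0, 1]`.
  set c : X → ℝ := fun x => if x = lo then 2 * M else if x = hi then 0 else M
  set t : Ω → ℝ := fun ω => (B ω + c (own ω)) / (2 * M)
  have hrange : ∀ ω, 0 ≤ B ω + c (own ω) ∧ B ω + c (own ω) ≤ 2 * M := by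
    intro ω
    have := abs_lt.mp (hB ω)
    simp only [c]
    split_ifs with h₁ h₂
    · exact ⟨by linarith, by linarith [hlo ω h₁]⟩
    · exact ⟨by linarith [hhi ω h₂], by linarith⟩
    · exact ⟨by linarith, by linarith⟩
  have ht : ∀ ω, 0 ≤ t ω ∧ t ω ≤ 1 := fun ω =>
    ⟨div_nonneg (hrange ω).1 (by positivity), (div_le_one (by positivity)).mpr (hrange ω).2⟩
  refine ⟨fun ω x => t ω * (if x = lo then 1 else 0) + (1 - t ω) * (if x = hi then 1 else 0),
    c, fun ω => ⟨fun x => ?_, ?_⟩, by simp [c, hne.symm, hM.ne'], fun ω => ?_⟩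
  · have := ht ω
    dsimp only
    split_ifs <;> linarith
  · simp [sum_add_distrib]
  · simp only [mul_sub, mul_add, sum_sub_distrib, sum_add_distrib, mul_ite, mul_one, mul_zero,
      sum_ite_eq', mem_univ, if_true]
    simp only [c, if_pos, if_neg hne.symm, t]
    field_simp
    ring

theorem nontrivial_of_symmetric_of_exists_ne {ι A : Type*} [DecidableEq ι]
    (s : ι → (ι → A) → ℝ) (hsym : ∀ (π : Equiv.Perm ι) (j : ι) (a : ι → A), s (π j) a = s j (a ∘ π))
    (hne : ∃ (k k' : ι) (a : ι → A), s k a ≠ s k' a) : Nontrivial A := by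
  obtain ⟨k, k', a, hkk'⟩ := hne
  by_contra hA
  rw [not_nontrivial_iff_subsingleton] at hA
  have := hsym (Equiv.swap k k') k a
  rw [Equiv.swap_apply_left, Subsingleton.elim (a ∘ _) a] at this
  exact hkk' this.symm

section Game

variable {n : ℕ} (hn : 2 ≤ n) {A : Type*} (s : Fin n → (Fin n → A) → ℝ)

/-- `G_j(a)`. -/
def maxOtherPayoff (j : Fin n) (a : Fin n → A) : ℝ :=
  (univ.erase j).sup' (eraseNonempty hn j) fun k => s k a

/-- `x` is a valid choice of `a*(A')`. -/
def IsUnbeatableOn (A' : Finset A) (x : A) : Prop :=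
  ∀ (j : Fin n) (a : Fin n → A), a j = x → (∀ k, k ≠ j → a k ∈ A') →
    maxOtherPayoff hn s j a ≤ s j a

def LeadsOnlyWithin (j : Fin n) (A' : Finset A) : Prop :=
  ∀ a : Fin n → A, a j ∈ A' → (∃ k, k ≠ j ∧ a k ∉ A') → s j a ≤ maxOtherPayoff hn s j a

variable {hn s}

theorem le_maxOtherPayoff {j k : Fin n} (hkj : k ≠ j) (a : Fin n → A) :
    s k a ≤ maxOtherPayoff hn s j a :=
  le_sup' (fun l => s l a) (mem_erase.mpr ⟨hkj, mem_univ k⟩)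

theorem le_maxOtherPayoff_of_le {j k : Fin n} (hkj : k ≠ j) {a : Fin n → A}
    (hk : maxOtherPayoff hn s k a ≤ s k a) : s j a ≤ maxOtherPayoff hn s j a :=
  (le_maxOtherPayoff hkj.symm a).trans (hk.trans (le_maxOtherPayoff hkj a))

variable (hn s) in
theorem leadsOnlyWithin_univ [Fintype A] (j : Fin n) : LeadsOnlyWithin hn s j (univ : Finset A) :=
  fun _ _ ⟨_, _, hk⟩ => absurd (mem_univ _) hk

theorem LeadsOnlyWithin.le_maxOtherPayoff_of_notMem_erase [DecidableEq A] {j : Fin n}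
    {A' : Finset A} {x : A} (h : LeadsOnlyWithin hn s j A') (hx : IsUnbeatableOn hn s A' x)
    {a : Fin n → A} (haj : a j ∈ A') {k : Fin n} (hkj : k ≠ j) (hk : a k ∉ A'.erase x) :
    s j a ≤ maxOtherPayoff hn s j a := by
  by_cases hout : ∃ k, k ≠ j ∧ a k ∉ A'
  · exact h a haj hout
  push Not at hout
  have hkx : a k = x := by_contra fun hkx => hk (mem_erase.mpr ⟨hkx, hout k hkj⟩)
  exact le_maxOtherPayoff_of_le hkj
    (hx k a hkx fun l _ => if hlj : l = j then hlj ▸ haj else hout l hlj)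

theorem LeadsOnlyWithin.erase [DecidableEq A] {j : Fin n} {A' : Finset A} {x : A}
    (h : LeadsOnlyWithin hn s j A') (hx : IsUnbeatableOn hn s A' x) :
    LeadsOnlyWithin hn s j (A'.erase x) := fun _ haj ⟨_, hkj, hk⟩ =>
  h.le_maxOtherPayoff_of_notMem_erase hx (mem_of_mem_erase haj) hkj hk

theorem exists_never_leading_of_leadsOnlyWithin [DecidableEq A]
    (hunex : ∀ A' : Finset A, A'.Nonempty → ∃ x ∈ A', IsUnbeatableOn hn s A' x) (j : Fin n) :
    ∀ A' : Finset A, A'.Nonempty → LeadsOnlyWithin hn s j A' →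
      ∃ y ∈ A', ∀ a : Fin n → A, a j = y → s j a ≤ maxOtherPayoff hn s j a := by
  intro A'
  induction A' using Finset.strongInduction with
  | _ A' ih =>
    intro hA' hlead
    obtain ⟨x, hxA', hx⟩ := hunex A' hA'
    by_cases hrest : (A'.erase x).Nonempty
    · obtain ⟨y, hy, hy'⟩ := ih _ (erase_ssubset hxA') hrest (hlead.erase hx)
      exact ⟨y, mem_of_mem_erase hy, hy'⟩
    · obtain ⟨k, hk⟩ := eraseNonempty hn j
      refine ⟨x, hxA', fun a haj => ?_⟩
      exact hlead.le_maxOtherPayoff_of_notMem_erase hx (haj ▸ hxA') (ne_of_mem_erase hk)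
        fun hk' => hrest ⟨_, hk'⟩

end Game

theorem unbeatable_zd_of_unexploitable_general {n : ℕ} (hn : 2 ≤ n) {A : Type}
    [Fintype A] [DecidableEq A]
    (s : Fin n → (Fin n → A) → ℝ)
    (hsym : ∀ (π : Equiv.Perm (Fin n)) (j : Fin n) (a : Fin n → A),
      s (π j) a = s j (a ∘ π))
    (hunex : ∀ A' : Finset A, A'.Nonempty → ∃ astar ∈ A',
      ∀ (j : Fin n) (a : Fin n → A), a j = astar → (∀ k, k ≠ j → a k ∈ A') →
        (Finset.univ.erase j).sup' (eraseNonempty hn j) (fun k => s k a) ≤ s j a)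
    (hnontriv : ∃ (k k' : Fin n) (a : Fin n → A), s k a ≠ s k' a) :
    ∀ j : Fin n, ∃ (T : (Fin n → A) → A → ℝ) (c : A → ℝ),
      (∀ a', (∀ x, 0 ≤ T a' x) ∧ ∑ x, T a' x = 1) ∧
      (∃ x y : A, c x ≠ c y) ∧
      (∀ a' : Fin n → A, ∑ x, c x * (T a' x - (if x = a' j then 1 else 0)) =
        s j a' - (Finset.univ.erase j).sup' (eraseNonempty hn j) (fun k => s k a')) ∧
      (∀ Pstar : (Fin n → A) → ℝ, (∀ a, 0 ≤ Pstar a) → (∑ a, Pstar a = 1) →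
        (∀ x : A, ∑ a', Pstar a' * (T a' x - (if x = a' j then 1 else 0)) = 0) →
        (∑ a, Pstar a * s j a =
          ∑ a, Pstar a * (Finset.univ.erase j).sup' (eraseNonempty hn j) (fun k => s k a)) ∧
        ∀ k : Fin n, k ≠ j → ∑ a, Pstar a * s k a ≤ ∑ a, Pstar a * s j a) := by
  intro j
  have : Nontrivial A := nontrivial_of_symmetric_of_exists_ne s hsym hnontriv
  obtain ⟨ahi, -, hhi⟩ := hunex univ univ_nonempty
  obtain ⟨alo, hlo, hlo'⟩ := exists_never_leading_of_leadsOnlyWithin hunex j (univ.erase ahi)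
    univ_nontrivial.erase_nonempty ((leadsOnlyWithin_univ hn s j).erase hhi)
  obtain ⟨T, c, hT, hc, hzd⟩ := exists_zd_strategy (fun a : Fin n → A => a j)
    (fun a => s j a - maxOtherPayoff hn s j a) (ne_of_mem_erase hlo)
    (fun a ha => sub_nonpos.mpr (hlo' a ha))
    (fun a ha => sub_nonneg.mpr (hhi j a ha fun k _ => mem_univ (a k)))
  refine ⟨T, c, hT, ⟨alo, ahi, hc⟩, hzd, fun P hP _ hstat => ?_⟩
  have hB := sum_mul_eq_zero_of_pressDyson P c _ _ hzd hstat
  simp only [mul_sub, sum_sub_distrib, sub_eq_zero] at hB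
  refine ⟨hB, fun k hkj => hB ▸ sum_le_sum fun a _ => ?_⟩
  exact mul_le_mul_of_nonneg_left (le_maxOtherPayoff hkj a) (hP a)

/-- Existence of unbeatable ZD strategies.  In a non-trivial unexploitable finite
totally symmetric game, every player `j` has a memory-one ZD strategy `T` with
non-constant coefficients `c` controlling `B(a) = s_j(a) - G_j(a)`
(`G_j(a) = max_{k≠j} s_k(a)`).  In particular, for every limit distribution
`Pstar` compatible with `T` through Akin's lemma (i.e. arising against arbitrary
strategies of the other players), it enforces `⟨s_j⟩* = ⟨G_j⟩*`, and hence
`S_j ≥ S_k` for every `k ≠ j`. -/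
theorem unbeatable_zd_of_unexploitable {n : ℕ} (hn : 2 ≤ n) {A : Type}
    [Fintype A] [DecidableEq A] [Nonempty A]
    (s : Fin n → (Fin n → A) → ℝ)
    (hsym : ∀ (π : Equiv.Perm (Fin n)) (j : Fin n) (a : Fin n → A),
      s (π j) a = s j (a ∘ π))
    (hunex : ∀ A' : Finset A, A'.Nonempty → ∃ astar ∈ A',
      ∀ (j : Fin n) (a : Fin n → A), a j = astar → (∀ k, k ≠ j → a k ∈ A') →
        (Finset.univ.erase j).sup' (eraseNonempty hn j) (fun k => s k a) ≤ s j a)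
    (hnontriv : ∃ (k k' : Fin n) (a : Fin n → A), s k a ≠ s k' a) :
    ∀ j : Fin n, ∃ (T : (Fin n → A) → A → ℝ) (c : A → ℝ),
      (∀ a', (∀ x, 0 ≤ T a' x) ∧ ∑ x, T a' x = 1) ∧
      (∃ x y : A, c x ≠ c y) ∧
      (∀ a' : Fin n → A, ∑ x, c x * (T a' x - (if x = a' j then 1 else 0)) =
        s j a' - (Finset.univ.erase j).sup' (eraseNonempty hn j) (fun k => s k a')) ∧
      (∀ Pstar : (Fin n → A) → ℝ, (∀ a, 0 ≤ Pstar a) → (∑ a, Pstar a = 1) →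
        (∀ x : A, ∑ a', Pstar a' * (T a' x - (if x = a' j then 1 else 0)) = 0) →
        (∑ a, Pstar a * s j a =
          ∑ a, Pstar a * (Finset.univ.erase j).sup' (eraseNonempty hn j) (fun k => s k a)) ∧
        ∀ k : Fin n, k ≠ j → ∑ a, Pstar a * s k a ≤ ∑ a, Pstar a * s j a) :=
  unbeatable_zd_of_unexploitable_general hn s hsym hunex hnontriv
end

section
/- In the n-player public goods game, the memory-one strategy T_j defined by T_j(C | a') = [a'_{-j} = (C,...,C)] (cooperate iff all other players cooperated last round) is a ZD strategy controlling B(a) := s_j(a) - G_j(a): its Press–Dyson component satisfies c·T̂_j(C | a') = B(a') for all profiles a', where T̂_j(C|a') = T_j(C|a') - [a'_j = C]. -/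
open Finset

/-- Public goods game payoff: `true` = cooperate `C`, `false` = defect `D`. -/
noncomputable def pgPay (n : ℕ) (c r : ℝ) (j : Fin n) (a : Fin n → Bool) : ℝ :=
  (r * c / n) * ∑ k ∈ Finset.univ.erase j, (if a k then (1 : ℝ) else 0)
    + c * (r / n - 1) * (if a j then 1 else 0)

lemma pgPay_eq {n : ℕ} (c r : ℝ) (k : Fin n) (a : Fin n → Bool) :
    pgPay n c r k a
      = (r * c / n) * (∑ m, (if a m then (1 : ℝ) else 0))
        - c * (if a k then 1 else 0) := by
  unfold pgPay
  have h : (∑ m, (if a m then (1 : ℝ) else 0))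
      = (∑ m ∈ Finset.univ.erase k, (if a m then (1 : ℝ) else 0))
        + (if a k then 1 else 0) := by
    exact (Finset.sum_erase_add _ _ (Finset.mem_univ k)).symm
  rw [h]; ring

/-- In the public goods game, the memory-one strategy with cooperation probability
`T_j(C|a') = [a'_{-j} = (C,…,C)]` is a ZD strategy controlling
`B(a) = s_j(a) - G_j(a)`: its Press–Dyson component satisfies
`c · (T_j(C|a') - [a'_j = C]) = B(a')` for all profiles `a'`. -/
theorem pg_zd_strategy {n : ℕ} (hn : 2 ≤ n) (c r : ℝ)
    (hc : 0 < c) (hr1 : 1 < r) (hrn : r < n) (j : Fin n) :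
    ∀ a' : Fin n → Bool,
      c * ((if ∀ k, k ≠ j → a' k = true then (1 : ℝ) else 0)
            - (if a' j then 1 else 0))
        = pgPay n c r j a'
          - (Finset.univ.erase j).sup' (eraseNonempty hn j) (fun k => pgPay n c r k a') := by
  intro a'
  set S : ℝ := ∑ m, (if a' m then (1 : ℝ) else 0) with hS
  have hsup : (Finset.univ.erase j).sup' (eraseNonempty hn j) (fun k => pgPay n c r k a')
      = (r * c / n) * S - c * (if ∀ k, k ≠ j → a' k = true then 1 else 0) := by
    by_cases hall : ∀ k, k ≠ j → a' k = true
    · rw [if_pos hall]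
      apply le_antisymm
      · apply Finset.sup'_le
        intro k hk
        rw [pgPay_eq, hall k (Finset.ne_of_mem_erase hk), ← hS]; norm_num
      · obtain ⟨k0, hk0⟩ := eraseNonempty hn j
        refine le_trans (le_of_eq ?_) (Finset.le_sup' _ hk0)
        rw [pgPay_eq, hall k0 (Finset.ne_of_mem_erase hk0), ← hS]; norm_num
    · rw [if_neg hall, mul_zero, sub_zero]
      push_neg at hall
      obtain ⟨k0, hk0ne, hk0⟩ := hall
      apply le_antisymm
      · apply Finset.sup'_le
        intro k hk
        rw [pgPay_eq]
        have : (0:ℝ) ≤ c * (if a' k then 1 else 0) := by positivity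
        linarith
      · refine le_trans (le_of_eq ?_) (Finset.le_sup' _ (Finset.mem_erase.mpr ⟨hk0ne, Finset.mem_univ k0⟩))
        rw [pgPay_eq]
        simp only [Bool.not_eq_true] at hk0
        rw [hk0, ← hS]; norm_num
  rw [hsup, pgPay_eq]
  ring
end
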